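/- Define Eve's projectors on ℂ^d_E ⊗ (ℂ²_{e₁}⊗ℂ²_{e₂}⊗ℂ²_{e₃}⊗ℂ²_{e₄}): M₅,₁ = P_E{1,…,d−1}⊗|1⟩⟨1|_{e₁}⊗|0⟩⟨0|_{e₂}⊗|1⟩⟨1|_{e₃}⊗|0⟩⟨0|_{e₄}; M₅,₂ = P_E{1,…,d−1}⊗|0⟩⟨0|_{e₁}⊗|1⟩⟨1|_{e₂}⊗|0⟩⟨0|_{e₃}⊗|1⟩⟨1|_{e₄}; M₅,₃ = |0⟩⟨0|_E⊗|1⟩⟨1|_{e₁}⊗|0⟩⟨0|_{e₂}⊗|1⟩⟨1|_{e₃}⊗|1⟩⟨1|_{e₄}; M₅,₄ = P_E{1,…,d−1}⊗|0⟩⟨0|_{e₁}⊗|1⟩⟨1|_{e₂}⊗|1⟩⟨1|_{e₃}⊗|0⟩⟨0|_{e₄}; M₅,₅ = |0⟩⟨0|_E⊗|1⟩⟨1|_{e₁}⊗|1⟩⟨1|_{e₂}⊗|0⟩⟨0|_{e₃}⊗|1⟩⟨1|_{e₄}; M₅,₆ = P_E{1,…,d−1}⊗|0⟩⟨0|_{e₁}⊗|0⟩⟨0|_{e₂}⊗I_{e₃}⊗I_{e₄};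 M₅,₇ = I_E⊗|1⟩⟨1|_{e₁}⊗|0⟩⟨0|_{e₂}⊗|0⟩⟨0|_{e₃}⊗I_{e₄}; M₅,₈ = |0⟩⟨0|_E⊗I_{e₁}⊗I_{e₂}⊗|1⟩⟨1|_{e₃}⊗|0⟩⟨0|_{e₄}; M₅,₉ = I_E⊗I_{e₁}⊗|1⟩⟨1|_{e₂}⊗|0⟩⟨0|_{e₃}⊗|0⟩⟨0|_{e₄}; M₅,₁₀ = I − Σ_{j=1}^{9} M₅,ⱼ, where P_E{1,…,d−1} = Σ_{k=1}^{d−1}|k⟩⟨k|_E. Then, tensored with the identity on all other factors, M₅,σ(k) acts as the identity on every post-measurement state arising from a state of subset H_k, where σ assigns H₆↦1, H₇↦2, H₈↦3, H₉↦4, H₁₀↦5, H₄↦6, H₃↦7, H₁↦8, H₂↦9, H₅↦10. -/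

import Mathlib

noncomputable section

/-- View a coefficient function as a vector of the Euclidean (Hilbert) space. -/
def ofFun {ι : Type*} [Fintype ι] (f : ι → ℂ) : EuclideanSpace ℂ ι := WithLp.toLp 2 f

/-- Transport an endomorphism of the coefficient functions to the Euclidean space. -/
def toE {ι : Type*} [Fintype ι] (T : (ι → ℂ) →ₗ[ℂ] (ι → ℂ)) :
    Module.End ℂ (EuclideanSpace ℂ ι) :=
  (WithLp.linearEquiv 2 ℂ (ι → ℂ)).symm.toLinearMap ∘ₗ T ∘ₗ
    (WithLp.linearEquiv 2 ℂ (ι → ℂ)).toLinearMap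

open Classical in
/-- Diagonal orthogonal projection keeping exactly the basis vectors whose index
satisfies `f`. -/
def diagP {ι : Type*} [Fintype ι] (f : ι → Prop) : Module.End ℂ (EuclideanSpace ℂ ι) :=
  toE (LinearMap.pi fun i => (if f i then (1 : ℂ) else 0) • LinearMap.proj i)

/-- Tensor product of two vectors, realized on the product index set. -/
def tensE {ι κ : Type*} [Fintype ι] [Fintype κ]
    (u : EuclideanSpace ℂ ι) (w : EuclideanSpace ℂ κ) : EuclideanSpace ℂ (ι × κ) :=
  ofFun fun p => u p.1 * w p.2

/-- The root of unity `ω_n = e^{2πi/n}`. -/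
def omegaC (n : ℕ) : ℂ := Complex.exp (2 * Real.pi * Complex.I / n)

/-- Computational basis vector `|k⟩` of `ℂ^d`. -/
def ketD (d k : ℕ) : EuclideanSpace ℂ (Fin d) :=
  ofFun fun u => if (u : ℕ) = k then 1 else 0

/-- The (unnormalized) vector `|α_i⟩ = Σ_{u=0}^{d−1} ω_d^{iu}|u⟩`. -/
def alphaD (d i : ℕ) : EuclideanSpace ℂ (Fin d) :=
  ofFun fun u => omegaC d ^ (i * (u : ℕ))

/-- The (unnormalized) vector `|γ_m⟩ = Σ_{u=0}^{d−2} ω_{d−1}^{mu}|u+1⟩`. -/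
def gammaD (d m : ℕ) : EuclideanSpace ℂ (Fin d) :=
  ofFun fun u => if (u : ℕ) = 0 then 0 else omegaC (d - 1) ^ (m * ((u : ℕ) - 1))

/-- Tensor product of five vectors of `ℂ^d`, realized on the index set `Fin 5 → Fin d`. -/
def tp5 {d : ℕ} (v0 v1 v2 v3 v4 : EuclideanSpace ℂ (Fin d)) :
    EuclideanSpace ℂ (Fin 5 → Fin d) :=
  ofFun fun x => v0 (x 0) * v1 (x 1) * v2 (x 2) * v3 (x 3) * v4 (x 4)

/-- The states of set (5): family `k : Fin 10` corresponds to `H_{k+1}`; the parameter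
`a` is the spectral parameter (`i ∈ ℤ_d` for `H₁,…,H₅`, `m ∈ ℤ_{d−1}` for `H₆,…,H₁₀`),
and `p` is the index of the computational basis vector `|p⟩ ∈ {|1⟩,…,|d−1⟩}`. -/
def stateOf (d : ℕ) (k : Fin 10) (a p : ℕ) : EuclideanSpace ℂ (Fin 5 → Fin d) :=
  if k = 0 then tp5 (alphaD d a) (alphaD d a) (ketD d p) (ketD d 0) (ketD d 0)
  else if k = 1 then tp5 (alphaD d a) (ketD d p) (ketD d 0) (ketD d 0) (alphaD d a)
  else if k = 2 then tp5 (ketD d p) (ketD d 0) (ketD d 0) (alphaD d a) (alphaD d a)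
  else if k = 3 then tp5 (ketD d 0) (ketD d 0) (alphaD d a) (alphaD d a) (ketD d p)
  else if k = 4 then tp5 (ketD d 0) (alphaD d a) (alphaD d a) (ketD d p) (ketD d 0)
  else if k = 5 then tp5 (gammaD d a) (ketD d 0) (ketD d p) (ketD d 0) (ketD d 1)
  else if k = 6 then tp5 (ketD d 0) (ketD d p) (ketD d 0) (ketD d 1) (gammaD d a)
  else if k = 7 then tp5 (ketD d p) (ketD d 0) (ketD d 1) (gammaD d a) (ketD d 0)
  else if k = 8 then tp5 (ketD d 0) (ketD d 1) (gammaD d a) (ketD d 0) (ketD d p)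
  else tp5 (ketD d 1) (gammaD d a) (ketD d 0) (ketD d p) (ketD d 0)

/-- Ranges of the parameters of the states of set (5). -/
def validIdx (d : ℕ) (k : Fin 10) (a p : ℕ) : Prop :=
  (if (k : ℕ) < 5 then a < d else a < d - 1) ∧ 1 ≤ p ∧ p < d

/-- The full Hilbert space: five `ℂ^d` subsystems `A,B,C,D,E` (positions `0,…,4`),
four ancilla qubits `a,b,c,v` (first `Fin 4 → Fin 2` factor, attached to `A,B,C,D`),
and four ancilla qubits `e₁,e₂,e₃,e₄` (second factor, held by Eve). -/
abbrev W4 (d : ℕ) : Type :=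
  EuclideanSpace ℂ ((Fin 5 → Fin d) × ((Fin 4 → Fin 2) × (Fin 4 → Fin 2)))

/-- The ancilla state `|φ⁺⟩_{ae₁} ⊗ |φ⁺⟩_{be₂} ⊗ |φ⁺⟩_{ce₃} ⊗ |φ⁺⟩_{ve₄}`,
where `|φ⁺⟩ = (|00⟩+|11⟩)/√2`. -/
def anc4 : EuclideanSpace ℂ ((Fin 4 → Fin 2) × (Fin 4 → Fin 2)) :=
  ofFun fun q => ∏ k : Fin 4, (if q.1 k = q.2 k then (Real.sqrt 2 : ℂ)⁻¹ else 0)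

/-- The measurement projector
`Q_{Xx} = |0⟩⟨0|_X ⊗ |0⟩⟨0|_x + (Σ_{k=1}^{d−1}|k⟩⟨k|_X) ⊗ |1⟩⟨1|_x`
on the main subsystem at position `X` and its ancilla qubit at position `j`. -/
def Qproj (d : ℕ) (X : Fin 5) (j : Fin 4) : Module.End ℂ (W4 d) :=
  diagP fun q => ((q.1 X : ℕ) = 0 ∧ q.2.1 j = 0) ∨ ((q.1 X : ℕ) ≠ 0 ∧ q.2.1 j = 1)

/-- The post-measurement state
`(Q_{Aa}Q_{Bb}Q_{Cc}Q_{Dv})(|h⟩ ⊗ |φ⁺⟩_{ae₁} ⊗ |φ⁺⟩_{be₂} ⊗ |φ⁺⟩_{ce₃} ⊗ |φ⁺⟩_{ve₄})`. -/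
def post4 (d : ℕ) (h : EuclideanSpace ℂ (Fin 5 → Fin d)) : W4 d :=
  (Qproj d 0 0 * Qproj d 1 1 * Qproj d 2 2 * Qproj d 3 3) (tensE h anc4)

/-- Eve's projectors `M₅,₁, …, M₅,₉` (indices `0,…,8`), acting on her qudit `E`
(position 4) and her four ancilla qubits `e₁,…,e₄`. -/
def eveMaux (d : ℕ) (j : ℕ) : Module.End ℂ (W4 d) :=
  if j = 0 then diagP fun q => (q.1 4 : ℕ) ≠ 0 ∧
    q.2.2 0 = 1 ∧ q.2.2 1 = 0 ∧ q.2.2 2 = 1 ∧ q.2.2 3 = 0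
  else if j = 1 then diagP fun q => (q.1 4 : ℕ) ≠ 0 ∧
    q.2.2 0 = 0 ∧ q.2.2 1 = 1 ∧ q.2.2 2 = 0 ∧ q.2.2 3 = 1
  else if j = 2 then diagP fun q => (q.1 4 : ℕ) = 0 ∧
    q.2.2 0 = 1 ∧ q.2.2 1 = 0 ∧ q.2.2 2 = 1 ∧ q.2.2 3 = 1
  else if j = 3 then diagP fun q => (q.1 4 : ℕ) ≠ 0 ∧
    q.2.2 0 = 0 ∧ q.2.2 1 = 1 ∧ q.2.2 2 = 1 ∧ q.2.2 3 = 0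
  else if j = 4 then diagP fun q => (q.1 4 : ℕ) = 0 ∧
    q.2.2 0 = 1 ∧ q.2.2 1 = 1 ∧ q.2.2 2 = 0 ∧ q.2.2 3 = 1
  else if j = 5 then diagP fun q => (q.1 4 : ℕ) ≠ 0 ∧ q.2.2 0 = 0 ∧ q.2.2 1 = 0
  else if j = 6 then diagP fun q => q.2.2 0 = 1 ∧ q.2.2 1 = 0 ∧ q.2.2 2 = 0
  else if j = 7 then diagP fun q => (q.1 4 : ℕ) = 0 ∧ q.2.2 2 = 1 ∧ q.2.2 3 = 0
  else diagP fun q => q.2.2 1 = 1 ∧ q.2.2 2 = 0 ∧ q.2.2 3 = 0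

/-- Eve's measurement `{M₅,₁, …, M₅,₁₀}`: index `j : Fin 10` corresponds to
`M₅,(j+1)`, and `M₅,₁₀ = I − Σ_{j=1}^{9} M₅,ⱼ`. -/
def eveM (d : ℕ) (j : Fin 10) : Module.End ℂ (W4 d) :=
  if (j : ℕ) < 9 then eveMaux d j else 1 - ∑ i ∈ Finset.range 9, eveMaux d i

/-- The assignment `σ` of measurement outcomes to families:
`H₁↦M₅,₈, H₂↦M₅,₉, H₃↦M₅,₇, H₄↦M₅,₆, H₅↦M₅,₁₀, H₆↦M₅,₁, H₇↦M₅,₂, H₈↦M₅,₃,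
H₉↦M₅,₄, H₁₀↦M₅,₅` (all indices displayed 1-based). -/
def sigmaAssign : Fin 10 → Fin 10 := ![7, 8, 6, 5, 9, 0, 1, 2, 3, 4]


open Classical in
lemma diagP_apply {ι : Type*} [Fintype ι] (f : ι → Prop) (v : EuclideanSpace ℂ ι) (q : ι) :
    diagP f v q = if f q then v q else 0 := by
  show (if f q then (1:ℂ) else 0) • v q = _
  split_ifs <;> simp

lemma diagP_fix {ι : Type*} [Fintype ι] (f : ι → Prop) (v : EuclideanSpace ℂ ι)
    (hv : ∀ q, v q ≠ 0 → f q) : diagP f v = v := by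
  ext q
  rw [diagP_apply]
  by_cases h : f q
  · simp [h]
  · simp only [h, if_false]
    by_contra hne
    exact h (hv q fun h0 => hne h0.symm)

lemma diagP_kill {ι : Type*} [Fintype ι] (f : ι → Prop) (v : EuclideanSpace ℂ ι)
    (hv : ∀ q, v q ≠ 0 → ¬ f q) : diagP f v = 0 := by
  ext q
  rw [diagP_apply]
  by_cases h : f q
  · simp only [h, if_true]
    by_contra hne
    exact hv q (by simpa using hne) h
  · simp [h]

lemma ketD_ne {d k : ℕ} {u : Fin d} (h : ketD d k u ≠ 0) : (u : ℕ) = k := by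
  by_contra hc
  exact h (if_neg hc)

lemma gammaD_ne {d m : ℕ} {u : Fin d} (h : gammaD d m u ≠ 0) : (u : ℕ) ≠ 0 := by
  intro hc
  exact h (if_pos hc)

lemma tp5_ne {d : ℕ} {v0 v1 v2 v3 v4 : EuclideanSpace ℂ (Fin d)} {x : Fin 5 → Fin d}
    (h : tp5 v0 v1 v2 v3 v4 x ≠ 0) :
    v0 (x 0) ≠ 0 ∧ v1 (x 1) ≠ 0 ∧ v2 (x 2) ≠ 0 ∧ v3 (x 3) ≠ 0 ∧ v4 (x 4) ≠ 0 := by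
  have h' : v0 (x 0) * v1 (x 1) * v2 (x 2) * v3 (x 3) * v4 (x 4) ≠ 0 := h
  refine ⟨?_, ?_, ?_, ?_, ?_⟩ <;> intro h0 <;> apply h' <;> simp [h0]

lemma anc4_ne {q2 : (Fin 4 → Fin 2) × (Fin 4 → Fin 2)} (h : anc4 q2 ≠ 0) :
    ∀ k, q2.1 k = q2.2 k := by
  intro k
  by_contra hc
  apply h
  show (∏ k : Fin 4, if q2.1 k = q2.2 k then ((Real.sqrt 2 : ℂ))⁻¹ else 0) = 0
  exact Finset.prod_eq_zero (Finset.mem_univ k) (if_neg hc)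

lemma post4_support {d : ℕ} (h : EuclideanSpace ℂ (Fin 5 → Fin d))
    (q : (Fin 5 → Fin d) × ((Fin 4 → Fin 2) × (Fin 4 → Fin 2)))
    (hq : post4 d h q ≠ 0) :
    h q.1 ≠ 0 ∧
    q.2.2 0 = (if (q.1 0 : ℕ) = 0 then 0 else 1) ∧
    q.2.2 1 = (if (q.1 1 : ℕ) = 0 then 0 else 1) ∧
    q.2.2 2 = (if (q.1 2 : ℕ) = 0 then 0 else 1) ∧
    q.2.2 3 = (if (q.1 3 : ℕ) = 0 then 0 else 1) := by
  simp only [post4, Module.End.mul_apply, Qproj, diagP_apply] at hq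
  split_ifs at hq with hc0 hc1 hc2 hc3 <;> try exact absurd rfl hq
  have hq' : h q.1 * anc4 q.2 ≠ 0 := hq
  have hanc := anc4_ne (right_ne_zero_of_mul hq')
  have tfact : ∀ (j : Fin 4) (X : Fin 5),
      ((q.1 X : ℕ) = 0 ∧ q.2.1 j = 0) ∨ ((q.1 X : ℕ) ≠ 0 ∧ q.2.1 j = 1) →
      q.2.2 j = if (q.1 X : ℕ) = 0 then 0 else 1 := by
    rintro j X (⟨e, hs⟩ | ⟨e, hs⟩) <;> rw [← hanc j, hs] <;> simp [e]
  exact ⟨left_ne_zero_of_mul hq', tfact 0 0 hc0, tfact 1 1 hc1, tfact 2 2 hc2, tfact 3 3 hc3⟩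

/-- Step 2 of Theorem 8: for every family `H_k` of set (5), the
projector `M₅,σ(k)` acts as the identity on every post-measurement state arising
from a state of `H_k`. -/
theorem thm8_step2_eve_measurement_identifies (d : ℕ) (hd : 3 ≤ d) :
    ∀ (k : Fin 10) (a p : ℕ), validIdx d k a p →
      eveM d (sigmaAssign k) (post4 d (stateOf d k a p)) = post4 d (stateOf d k a p) := by
  intro k a p hval
  fin_cases k
  · -- k = 0 : H₁ = α α p 0 0, M₅,₈
    obtain ⟨ha, hp1, hpd⟩ : a < d ∧ 1 ≤ p ∧ p < d := hval
    have hp0 : p ≠ 0 := by omega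
    show diagP (fun q => (q.1 4 : ℕ) = 0 ∧ q.2.2 2 = 1 ∧ q.2.2 3 = 0) (post4 d _) = post4 d _
    apply diagP_fix
    rintro ⟨x, s, t⟩ hq
    obtain ⟨hx, h0, h1, h2, h3⟩ := post4_support _ _ hq
    dsimp only at hx h0 h1 h2 h3
    obtain ⟨f0, f1, f2, f3, f4⟩ := tp5_ne (show tp5 (alphaD d a) (alphaD d a) (ketD d p)
      (ketD d 0) (ketD d 0) x ≠ 0 from hx)
    exact ⟨ketD_ne f4, by simp [h2, ketD_ne f2, hp0], by simp [h3, ketD_ne f3]⟩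
  · -- k = 1 : H₂ = α p 0 0 α, M₅,₉
    obtain ⟨ha, hp1, hpd⟩ : a < d ∧ 1 ≤ p ∧ p < d := hval
    have hp0 : p ≠ 0 := by omega
    show diagP (fun q => q.2.2 1 = 1 ∧ q.2.2 2 = 0 ∧ q.2.2 3 = 0) (post4 d _) = post4 d _
    apply diagP_fix
    rintro ⟨x, s, t⟩ hq
    obtain ⟨hx, h0, h1, h2, h3⟩ := post4_support _ _ hq
    dsimp only at hx h0 h1 h2 h3
    obtain ⟨f0, f1, f2, f3, f4⟩ := tp5_ne (show tp5 (alphaD d a) (ketD d p) (ketD d 0)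
      (ketD d 0) (alphaD d a) x ≠ 0 from hx)
    exact ⟨by simp [h1, ketD_ne f1, hp0], by simp [h2, ketD_ne f2], by simp [h3, ketD_ne f3]⟩
  · -- k = 2 : H₃ = p 0 0 α α, M₅,₇
    obtain ⟨ha, hp1, hpd⟩ : a < d ∧ 1 ≤ p ∧ p < d := hval
    have hp0 : p ≠ 0 := by omega
    show diagP (fun q => q.2.2 0 = 1 ∧ q.2.2 1 = 0 ∧ q.2.2 2 = 0) (post4 d _) = post4 d _
    apply diagP_fix
    rintro ⟨x, s, t⟩ hq
    obtain ⟨hx, h0, h1, h2, h3⟩ := post4_support _ _ hq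
    dsimp only at hx h0 h1 h2 h3
    obtain ⟨f0, f1, f2, f3, f4⟩ := tp5_ne (show tp5 (ketD d p) (ketD d 0) (ketD d 0)
      (alphaD d a) (alphaD d a) x ≠ 0 from hx)
    exact ⟨by simp [h0, ketD_ne f0, hp0], by simp [h1, ketD_ne f1], by simp [h2, ketD_ne f2]⟩
  · -- k = 3 : H₄ = 0 0 α α p, M₅,₆
    obtain ⟨ha, hp1, hpd⟩ : a < d ∧ 1 ≤ p ∧ p < d := hval
    have hp0 : p ≠ 0 := by omega
    show diagP (fun q => (q.1 4 : ℕ) ≠ 0 ∧ q.2.2 0 = 0 ∧ q.2.2 1 = 0) (post4 d _) = post4 d _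
    apply diagP_fix
    rintro ⟨x, s, t⟩ hq
    obtain ⟨hx, h0, h1, h2, h3⟩ := post4_support _ _ hq
    dsimp only at hx h0 h1 h2 h3
    obtain ⟨f0, f1, f2, f3, f4⟩ := tp5_ne (show tp5 (ketD d 0) (ketD d 0) (alphaD d a)
      (alphaD d a) (ketD d p) x ≠ 0 from hx)
    exact ⟨by rw [ketD_ne f4]; omega, by simp [h0, ketD_ne f0], by simp [h1, ketD_ne f1]⟩
  · -- k = 4 : H₅ = 0 α α p 0, M₅,₁₀
    obtain ⟨ha, hp1, hpd⟩ : a < d ∧ 1 ≤ p ∧ p < d := hval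
    have hp0 : p ≠ 0 := by omega
    show (1 - ∑ i ∈ Finset.range 9, eveMaux d i)
        (post4 d (tp5 (ketD d 0) (alphaD d a) (alphaD d a) (ketD d p) (ketD d 0)))
      = post4 d (tp5 (ketD d 0) (alphaD d a) (alphaD d a) (ketD d p) (ketD d 0))
    have hz : ∀ i ∈ Finset.range 9,
        eveMaux d i (post4 d (tp5 (ketD d 0) (alphaD d a) (alphaD d a) (ketD d p) (ketD d 0)))
          = 0 := by
      intro i hi
      have hi' := Finset.mem_range.mp hi
      have key : ∀ q, post4 d (tp5 (ketD d 0) (alphaD d a) (alphaD d a) (ketD d p)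
          (ketD d 0)) q ≠ 0 →
          (q.1 4 : ℕ) = 0 ∧ q.2.2 0 = 0 ∧ q.2.2 3 = 1 := by
        rintro ⟨x, s, t⟩ hq
        obtain ⟨hx, h0, h1, h2, h3⟩ := post4_support _ _ hq
        dsimp only at hx h0 h1 h2 h3
        obtain ⟨f0, f1, f2, f3, f4⟩ := tp5_ne hx
        exact ⟨ketD_ne f4, by simp [h0, ketD_ne f0], by simp [h3, ketD_ne f3, hp0]⟩
      interval_cases i <;>
        (apply diagP_kill
         intro q hq hc
         obtain ⟨e4, ht0, ht3⟩ := key q hq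
         simp [e4, ht0, ht3] at hc)
    rw [LinearMap.sub_apply, LinearMap.sum_apply, Finset.sum_eq_zero hz,
      Module.End.one_apply, sub_zero]
  · -- k = 5 : H₆ = γ 0 p 0 1, M₅,₁
    obtain ⟨ha, hp1, hpd⟩ : a < d - 1 ∧ 1 ≤ p ∧ p < d := hval
    have hp0 : p ≠ 0 := by omega
    show diagP (fun q => (q.1 4 : ℕ) ≠ 0 ∧
        q.2.2 0 = 1 ∧ q.2.2 1 = 0 ∧ q.2.2 2 = 1 ∧ q.2.2 3 = 0) (post4 d _) = post4 d _
    apply diagP_fix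
    rintro ⟨x, s, t⟩ hq
    obtain ⟨hx, h0, h1, h2, h3⟩ := post4_support _ _ hq
    dsimp only at hx h0 h1 h2 h3
    obtain ⟨f0, f1, f2, f3, f4⟩ := tp5_ne (show tp5 (gammaD d a) (ketD d 0) (ketD d p)
      (ketD d 0) (ketD d 1) x ≠ 0 from hx)
    exact ⟨by rw [ketD_ne f4]; omega, by simp [h0, gammaD_ne f0], by simp [h1, ketD_ne f1],
      by simp [h2, ketD_ne f2, hp0], by simp [h3, ketD_ne f3]⟩
  · -- k = 6 : H₇ = 0 p 0 1 γ, M₅,₂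
    obtain ⟨ha, hp1, hpd⟩ : a < d - 1 ∧ 1 ≤ p ∧ p < d := hval
    have hp0 : p ≠ 0 := by omega
    show diagP (fun q => (q.1 4 : ℕ) ≠ 0 ∧
        q.2.2 0 = 0 ∧ q.2.2 1 = 1 ∧ q.2.2 2 = 0 ∧ q.2.2 3 = 1) (post4 d _) = post4 d _
    apply diagP_fix
    rintro ⟨x, s, t⟩ hq
    obtain ⟨hx, h0, h1, h2, h3⟩ := post4_support _ _ hq
    dsimp only at hx h0 h1 h2 h3
    obtain ⟨f0, f1, f2, f3, f4⟩ := tp5_ne (show tp5 (ketD d 0) (ketD d p) (ketD d 0)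
      (ketD d 1) (gammaD d a) x ≠ 0 from hx)
    exact ⟨gammaD_ne f4, by simp [h0, ketD_ne f0], by simp [h1, ketD_ne f1, hp0],
      by simp [h2, ketD_ne f2], by simp [h3, ketD_ne f3]⟩
  · -- k = 7 : H₈ = p 0 1 γ 0, M₅,₃
    obtain ⟨ha, hp1, hpd⟩ : a < d - 1 ∧ 1 ≤ p ∧ p < d := hval
    have hp0 : p ≠ 0 := by omega
    show diagP (fun q => (q.1 4 : ℕ) = 0 ∧
        q.2.2 0 = 1 ∧ q.2.2 1 = 0 ∧ q.2.2 2 = 1 ∧ q.2.2 3 = 1) (post4 d _) = post4 d _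
    apply diagP_fix
    rintro ⟨x, s, t⟩ hq
    obtain ⟨hx, h0, h1, h2, h3⟩ := post4_support _ _ hq
    dsimp only at hx h0 h1 h2 h3
    obtain ⟨f0, f1, f2, f3, f4⟩ := tp5_ne (show tp5 (ketD d p) (ketD d 0) (ketD d 1)
      (gammaD d a) (ketD d 0) x ≠ 0 from hx)
    exact ⟨ketD_ne f4, by simp [h0, ketD_ne f0, hp0], by simp [h1, ketD_ne f1],
      by simp [h2, ketD_ne f2], by simp [h3, gammaD_ne f3]⟩
  · -- k = 8 : H₉ = 0 1 γ 0 p, M₅,₄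
    obtain ⟨ha, hp1, hpd⟩ : a < d - 1 ∧ 1 ≤ p ∧ p < d := hval
    have hp0 : p ≠ 0 := by omega
    show diagP (fun q => (q.1 4 : ℕ) ≠ 0 ∧
        q.2.2 0 = 0 ∧ q.2.2 1 = 1 ∧ q.2.2 2 = 1 ∧ q.2.2 3 = 0) (post4 d _) = post4 d _
    apply diagP_fix
    rintro ⟨x, s, t⟩ hq
    obtain ⟨hx, h0, h1, h2, h3⟩ := post4_support _ _ hq
    dsimp only at hx h0 h1 h2 h3
    obtain ⟨f0, f1, f2, f3, f4⟩ := tp5_ne (show tp5 (ketD d 0) (ketD d 1) (gammaD d a)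
      (ketD d 0) (ketD d p) x ≠ 0 from hx)
    exact ⟨by rw [ketD_ne f4]; omega, by simp [h0, ketD_ne f0], by simp [h1, ketD_ne f1],
      by simp [h2, gammaD_ne f2], by simp [h3, ketD_ne f3]⟩
  · -- k = 9 : H₁₀ = 1 γ 0 p 0, M₅,₅
    obtain ⟨ha, hp1, hpd⟩ : a < d - 1 ∧ 1 ≤ p ∧ p < d := hval
    have hp0 : p ≠ 0 := by omega
    show diagP (fun q => (q.1 4 : ℕ) = 0 ∧
        q.2.2 0 = 1 ∧ q.2.2 1 = 1 ∧ q.2.2 2 = 0 ∧ q.2.2 3 = 1) (post4 d _) = post4 d _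
    apply diagP_fix
    rintro ⟨x, s, t⟩ hq
    obtain ⟨hx, h0, h1, h2, h3⟩ := post4_support _ _ hq
    dsimp only at hx h0 h1 h2 h3
    obtain ⟨f0, f1, f2, f3, f4⟩ := tp5_ne (show tp5 (ketD d 1) (gammaD d a) (ketD d 0)
      (ketD d p) (ketD d 0) x ≠ 0 from hx)
    exact ⟨ketD_ne f4, by simp [h0, ketD_ne f0], by simp [h1, gammaD_ne f1],
      by simp [h2, ketD_ne f2], by simp [h3, ketD_ne f3, hp0]⟩
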